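/- arXiv:2001.01254 — 4 statements merged into one kernel-verified Lean document; each statement's English description precedes it below -/
import Mathlib

section
/- Let A be a complete abelian category with a generator. Then every object of A embeds in an injective object if and only if A has an injective cogenerator. -/
open CategoryTheory CategoryTheory.Limits

universe u v

/-!
Given enough injectives, an injective object containing the product of all quotients of the
generator `G` is a cogenerator: a nonzero `f : X ⟶ Y` is nonzero on some `g : G ⟶ X`, and the
image of `g ≫ f` is a quotient of `G`, which embeds in that injective and so extends along `Y`
(Freyd, *Abelian Categories*, Theorem 3.37). Conversely, an injective cogenerator `C` embeds every
`X` into the injective product `∏_{X ⟶ C} C`.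
-/

namespace CategoryTheory

variable {C : Type u} [Category.{v} C]

theorem Preadditive.isSeparator_iff_exists_comp_ne_zero [Preadditive C] (G : C) :
    IsSeparator G ↔ ∀ ⦃X Y : C⦄ (f : X ⟶ Y), f ≠ 0 → ∃ g : G ⟶ X, g ≫ f ≠ 0 := by
  rw [Preadditive.isSeparator_iff]
  refine forall₃_congr fun X Y f => ?_
  rw [← not_imp_not]
  push Not
  rfl

theorem Preadditive.isCoseparator_iff_exists_comp_ne_zero [Preadditive C] (G : C) :
    IsCoseparator G ↔ ∀ ⦃X Y : C⦄ (f : X ⟶ Y), f ≠ 0 → ∃ h : Y ⟶ G, f ≫ h ≠ 0 := by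
  rw [Preadditive.isCoseparator_iff]
  refine forall₃_congr fun X Y f => ?_
  rw [← not_imp_not]
  push Not
  rfl

theorem EnoughInjectives.of_forall_exists_mono
    (h : ∀ X : C, ∃ (I : C) (i : X ⟶ I), Injective I ∧ Mono i) : EnoughInjectives C where
  presentation X := by
    obtain ⟨I, i, hI, hi⟩ := h X
    exact ⟨{ J := I, f := i }⟩

end CategoryTheory

/-- In a complete abelian category with a generator, every object embeds in an injective
object if and only if the category has an injective cogenerator. -/
theorem embeds_in_injective_iff_injective_cogenerator
    {A : Type u} [Category.{v} A] [Abelian A] [HasLimits A]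
    (G : A) (hG : ∀ ⦃X Y : A⦄ (f : X ⟶ Y), f ≠ 0 → ∃ g : G ⟶ X, g ≫ f ≠ 0) :
    (∀ X : A, ∃ (I : A) (i : X ⟶ I), Injective I ∧ Mono i) ↔
      (∃ C : A, Injective C ∧ ∀ ⦃X Y : A⦄ (f : X ⟶ Y), f ≠ 0 → ∃ h : Y ⟶ C, f ≫ h ≠ 0) := by
  constructor
  · intro hemb
    have := EnoughInjectives.of_forall_exists_mono hemb
    obtain ⟨C, hC, hCosep⟩ := Abelian.has_injective_coseparator G
      ((Preadditive.isSeparator_iff_exists_comp_ne_zero G).2 hG)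
    exact ⟨C, hC, (Preadditive.isCoseparator_iff_exists_comp_ne_zero C).1 hCosep⟩
  · rintro ⟨C, hC, hCosep⟩ X
    have hmono := (isCoseparator_iff_mono C).1
      ((Preadditive.isCoseparator_iff_exists_comp_ne_zero C).2 hCosep) X
    exact ⟨_, _, inferInstance, hmono⟩
end

section
/- Let M be a small additive category and let E be an injective object in the category of additive functors from M to abelian groups. Then for every sequence X⁰ → X¹ → ⋯ → Xⁿ → X^{n+1} in M such that 0 → Hom(X^{n+1},−) → Hom(Xⁿ,−) → ⋯ → Hom(X¹,−) → Hom(X⁰,−) is exact in the functor category, the sequence E(X⁰) → E(X¹) → ⋯ → E(Xⁿ) → E(X^{n+1}) → 0 is an exact sequence of abelian groups. -/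
open CategoryTheory CategoryTheory.Limits

universe u

variable {M : Type u} [SmallCategory M] [Preadditive M]

/-- The category `(M, G)` of additive functors from `M` to abelian groups, as a full
subcategory of the functor category `M ⥤ AddCommGrp`. -/
abbrev AdditiveFunctorCat (M : Type u) [SmallCategory M] [Preadditive M] :=
  ObjectProperty.FullSubcategory (fun F : M ⥤ AddCommGrpCat.{u} => F.Additive)

/-!
By Yoneda, `E(X) ≅ Hom(Hom(X, -), E)`, so the claim is that `Hom(-, E)` turns the exact sequence
of representables into an exact sequence, which is what injectivity of `E` provides. Concretely,
let `f : A ⟶ B` and let `e ∈ E(B)` be killed by every `b : B ⟶ Y` with `f ≫ b = 0`. Then `e`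
defines a morphism to `E` from the image of `Hom(B, -) → Hom(A, -)`, computed pointwise as the
quotient of `Hom(B, -)` by the kernel; extending it along the inclusion into `Hom(A, -)` and
evaluating at `𝟙 A` gives a preimage of `e` under `E(f)`. Surjectivity of `E(d n)` and exactness
at `E(X^{j+1})` are the cases where the kernel condition follows from injectivity, resp. exactness,
of the representable sequence.
-/

universe v

open Opposite

namespace CategoryTheory.NatTrans

variable {C : Type*} [Category C] {F G H : C ⥤ AddCommGrpCat.{v}} (α : F ⟶ G)

def coimageFunctor : C ⥤ AddCommGrpCat.{v} where
  obj Y := AddCommGrpCat.of (F.obj Y ⧸ (α.app Y).hom.ker)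
  map {Y Z} φ := AddCommGrpCat.ofHom <| QuotientAddGroup.map _ _ (F.map φ).hom fun x hx => by
    simp_all [AddMonoidHom.mem_ker, NatTrans.naturality_apply]
  map_id Y := by ext; simp
  map_comp φ ψ := by ext; simp

instance [Preadditive C] [F.Additive] : (coimageFunctor α).Additive where
  map_add {Y Z φ ψ} := by
    ext x
    induction x using QuotientAddGroup.induction_on with
    | H x => simp only [coimageFunctor, F.map_add]; rfl

def coimageι : coimageFunctor α ⟶ G where
  app Y := AddCommGrpCat.ofHom (QuotientAddGroup.kerLift (α.app Y).hom)
  naturality Y Z φ := by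
    ext x
    induction x using QuotientAddGroup.induction_on with
    | H x => exact α.naturality_apply φ x

lemma coimageι_app_injective (Y : C) : Function.Injective ((coimageι α).app Y) :=
  QuotientAddGroup.kerLift_injective _

def coimageDesc (β : F ⟶ H) (hβ : ∀ Y x, α.app Y x = 0 → β.app Y x = 0) :
    coimageFunctor α ⟶ H where
  app Y := AddCommGrpCat.ofHom (QuotientAddGroup.lift _ (β.app Y).hom fun x => hβ Y x)
  naturality Y Z φ := by
    ext x
    induction x using QuotientAddGroup.induction_on with
    | H x => exact β.naturality_apply φ x

end CategoryTheory.NatTrans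

namespace AdditiveFunctorCat

instance (E : AdditiveFunctorCat M) : E.obj.Additive := E.property

def coyoneda (A : M) : AdditiveFunctorCat M :=
  ⟨preadditiveCoyoneda.obj (op A), inferInstance⟩

@[simp]
lemma coyoneda_map_apply {A Y Z : M} (φ : Y ⟶ Z) (g : A ⟶ Y) :
    (coyoneda A).obj.map φ g = g ≫ φ := rfl

def homOfElement (E : AdditiveFunctorCat M) {A : M} (e : E.obj.obj A) : coyoneda A ⟶ E :=
  ObjectProperty.homMk
    { app Y := AddCommGrpCat.ofHom
        { toFun g := E.obj.map g e
          map_zero' := show E.obj.map (0 : A ⟶ Y) e = 0 by simp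
          map_add' := fun (g g' : A ⟶ Y) =>
            show E.obj.map (g + g') e = E.obj.map g e + E.obj.map g' e by simp }
      naturality Y Z φ := by
        ext (g : A ⟶ Y)
        exact show E.obj.map (g ≫ φ) e = E.obj.map φ (E.obj.map g e) by simp }

lemma hom_app_coyoneda {E : AdditiveFunctorCat M} {A Y : M} (φ : coyoneda A ⟶ E) (g : A ⟶ Y) :
    φ.hom.app Y g = E.obj.map g (φ.hom.app A (𝟙 A)) := by
  simpa using φ.hom.naturality_apply g (𝟙 A)

lemma mono_of_injective_app {F G : AdditiveFunctorCat M} (α : F ⟶ G)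
    (h : ∀ Y, Function.Injective (α.hom.app Y)) : Mono α :=
  have (Y : M) : Mono (α.hom.app Y) := (AddCommGrpCat.mono_iff_injective _).2 (h Y)
  (ObjectProperty.ι _).mono_of_mono_map (NatTrans.mono_of_mono_app α.hom)

theorem mem_range_map_of_injective (E : AdditiveFunctorCat M) [Injective E] {A B : M}
    (f : A ⟶ B) (e : E.obj.obj B) (he : ∀ Y (b : B ⟶ Y), f ≫ b = 0 → E.obj.map b e = 0) :
    e ∈ Set.range (E.obj.map f) := by
  let α := preadditiveCoyoneda.map f.op
  let Q : AdditiveFunctorCat M := ⟨NatTrans.coimageFunctor α, inferInstance⟩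
  let ι : Q ⟶ coyoneda A := ObjectProperty.homMk (NatTrans.coimageι α)
  have : Mono ι := mono_of_injective_app ι (NatTrans.coimageι_app_injective α)
  let ψ : Q ⟶ E := ObjectProperty.homMk (NatTrans.coimageDesc α (homOfElement E e).hom he)
  let φ := Injective.factorThru ψ ι
  refine ⟨φ.hom.app A (𝟙 A), ?_⟩
  calc E.obj.map f (φ.hom.app A (𝟙 A)) = φ.hom.app B (f ≫ 𝟙 B) := by
        rw [Category.comp_id]; exact (hom_app_coyoneda φ f).symm
    _ = (ι ≫ φ).hom.app B (QuotientAddGroup.mk (𝟙 B)) := rfl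
    _ = E.obj.map (𝟙 B) e := by rw [Injective.comp_factorThru]; rfl
    _ = e := by simp

theorem map_surjective_of_injective (E : AdditiveFunctorCat M) [Injective E] {A B : M}
    (f : A ⟶ B) (hf : ∀ Y, Function.Injective (fun b : B ⟶ Y => f ≫ b)) :
    Function.Surjective (E.obj.map f) := fun e =>
  mem_range_map_of_injective E f e fun Y b hb => by
    rw [hf Y (show f ≫ b = f ≫ 0 by simpa using hb)]
    simp

theorem map_exact_of_injective (E : AdditiveFunctorCat M) [Injective E] {A B C : M}
    (f : A ⟶ B) (g : B ⟶ C)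
    (hfg : ∀ Y, Function.Exact (fun c : C ⟶ Y => g ≫ c) (fun b : B ⟶ Y => f ≫ b)) :
    Function.Exact (E.obj.map f) (E.obj.map g) := by
  have hfg_zero : f ≫ g = 0 := (hfg C g).mpr ⟨𝟙 C, Category.comp_id g⟩
  intro e
  constructor
  · intro he
    refine mem_range_map_of_injective E f e fun Y b hb => ?_
    obtain ⟨c, rfl⟩ := (hfg Y b).mp hb
    simp [he]
  · rintro ⟨a, rfl⟩
    rw [← ConcreteCategory.comp_apply, ← Functor.map_comp, hfg_zero]
    simp

end AdditiveFunctorCat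

/-- If `E` is an injective object in the category of additive group-valued functors on `M`,
then `E` carries every sequence `X⁰ → ⋯ → X^{n+1}` whose associated sequence of representables
`0 → Hom(X^{n+1},−) → ⋯ → Hom(X⁰,−)` is exact (equivalently, every right `n`-exact sequence)
to an exact sequence `E(X⁰) → ⋯ → E(X^{n+1}) → 0` of abelian groups. -/
theorem injective_functor_is_right_nExact
    (n : ℕ) (E : AdditiveFunctorCat M) (hE : Injective E)
    (X : ℕ → M) (d : ∀ i, X i ⟶ X (i+1))
    -- exactness of `0 → Hom(X^{n+1},−) → ⋯ → Hom(X⁰,−)`, checked pointwise: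
    (h : ∀ Y : M, Function.Injective (fun g : X (n+1) ⟶ Y => d n ≫ g) ∧
      ∀ j, j + 1 ≤ n → Function.Exact (fun g : X (j+2) ⟶ Y => d (j+1) ≫ g)
        (fun g : X (j+1) ⟶ Y => d j ≫ g)) :
    Function.Surjective (E.obj.map (d n)) ∧
      ∀ j, j + 1 ≤ n → Function.Exact (E.obj.map (d j)) (E.obj.map (d (j+1))) :=
  ⟨AdditiveFunctorCat.map_surjective_of_injective E (d n) fun Y => (h Y).1,
    fun j hj => AdditiveFunctorCat.map_exact_of_injective E (d j) (d (j+1)) fun Y => (h Y).2 j hj⟩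
end

section
/- Let M be a small n-abelian category and let F' ⊆ F be functors in (M,G) with both F' and F mono functors and F/F' a mono functor, and let F'' ⊆ F' with F'/F'' a mono functor. Then F/F'' is a mono functor; that is, purity of subfunctors is transitive: if F'' is pure in F' and F' is pure in F, then F'' is pure in F. -/
open CategoryTheory CategoryTheory.Limits

universe u

variable {M : Type u} [SmallCategory M] [Preadditive M]

/-- The `n`-cokernel (right `n`-exactness) condition for an `ℕ`-indexed chain of morphisms:
applying `Hom(−,Y)` yields an exact sequence `0 → Hom(X^{n+1},Y) → ⋯ → Hom(X⁰,Y)`. -/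
def IsRightNExact (n : ℕ) (X : ℕ → M) (d : ∀ i, X i ⟶ X (i+1)) : Prop :=
  ∀ Y : M, Function.Injective (fun g : X (n+1) ⟶ Y => d n ≫ g) ∧
    ∀ j, j + 1 ≤ n → Function.Exact (fun g : X (j+2) ⟶ Y => d (j+1) ≫ g)
      (fun g : X (j+1) ⟶ Y => d j ≫ g)

/-- The `n`-kernel (left `n`-exactness) condition for an `ℕ`-indexed chain of morphisms:
applying `Hom(Y,−)` yields an exact sequence `0 → Hom(Y,X⁰) → ⋯ → Hom(Y,X^{n+1})`. -/
def IsLeftNExact (n : ℕ) (X : ℕ → M) (d : ∀ i, X i ⟶ X (i+1)) : Prop :=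
  ∀ Y : M, Function.Injective (fun g : Y ⟶ X 0 => g ≫ d 0) ∧
    ∀ j, j + 1 ≤ n → Function.Exact (fun g : Y ⟶ X j => g ≫ d j)
      (fun g : Y ⟶ X (j+1) => g ≫ d (j+1))

/-- An `n`-exact sequence: both a left and a right `n`-exact sequence. -/
def IsNExactSeq (n : ℕ) (X : ℕ → M) (d : ∀ i, X i ⟶ X (i+1)) : Prop :=
  IsRightNExact n X d ∧ IsLeftNExact n X d

/-- Jasso's axioms for an `n`-abelian category (with sequences encoded as `ℕ`-indexed
chains; only the indices `0, …, n+1` are relevant). -/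
structure IsNAbelian (n : ℕ) (M : Type u) [SmallCategory M] [Preadditive M] : Prop where
  idem : IsIdempotentComplete M
  hasNCokernels : ∀ ⦃A B : M⦄ (f : A ⟶ B), ∃ (X : ℕ → M) (d : ∀ i, X i ⟶ X (i+1))
    (h0 : X 0 = A) (h1 : X 1 = B), d 0 = eqToHom h0 ≫ f ≫ eqToHom h1.symm ∧
    IsRightNExact n X d
  hasNKernels : ∀ ⦃A B : M⦄ (f : A ⟶ B), ∃ (X : ℕ → M) (d : ∀ i, X i ⟶ X (i+1))
    (h0 : X n = A) (h1 : X (n+1) = B), d n = eqToHom h0 ≫ f ≫ eqToHom h1.symm ∧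
    IsLeftNExact n X d
  a2 : ∀ (X : ℕ → M) (d : ∀ i, X i ⟶ X (i+1)), Mono (d 0) → IsRightNExact n X d →
    IsLeftNExact n X d
  a3 : ∀ (X : ℕ → M) (d : ∀ i, X i ⟶ X (i+1)), Epi (d n) → IsLeftNExact n X d →
    IsRightNExact n X d

/-- A functor `M ⥤ Ab` is a mono functor if it sends monomorphisms of `M` to injective
group homomorphisms. -/
def IsMonoFunctor (F : M ⥤ AddCommGrpCat.{u}) : Prop :=
  ∀ ⦃X Y : M⦄ (f : X ⟶ Y), Mono f → Function.Injective (F.map f)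

/-! Since `F' ⟶ F` is mono, the cokernels form a short exact sequence
`0 → F'/F'' → F/F'' → F/F' → 0`. Evaluating it at a monomorphism `X ⟶ Y` of `M` gives a map of
exact sequences of abelian groups whose outer components are injective, so the middle one is
injective by the four lemma. -/

noncomputable section

namespace CategoryTheory.ShortComplex

variable {C : Type*} [Category* C] [Abelian C] {A B D : C} (i : A ⟶ B) (j : B ⟶ D)

abbrev cokernelComp : ShortComplex C :=
  ShortComplex.mk (cokernel.map i (i ≫ j) (𝟙 A) j (by simp))
    (cokernel.map (i ≫ j) j i (𝟙 D) (by simp)) (by ext; simp)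

def cokernelCompIsCokernel :
    IsColimit (CokernelCofork.ofπ (cokernelComp i j).g (cokernelComp i j).zero) :=
  CokernelCofork.IsColimit.ofπ _ _
    (fun k hk => cokernel.desc j (cokernel.π (i ≫ j) ≫ k) (by simpa using cokernel.π i ≫= hk))
    (fun k hk => by ext; simp)
    (fun k hk m hm => by ext; simp [← hm])

lemma cokernelComp_exact : (cokernelComp i j).Exact :=
  exact_of_g_is_cokernel _ (cokernelCompIsCokernel i j)

instance mono_cokernelComp_f [Mono j] : Mono (cokernelComp i j).f :=
  mono_of_epi_of_epi_of_mono
    (R₁ := ShortComplex.mk i (cokernel.π i) (by simp))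
    (R₂ := ShortComplex.mk (i ≫ j) (cokernel.π (i ≫ j)) (by simp))
    { τ₁ := 𝟙 A, τ₂ := j, τ₃ := (cokernelComp i j).f, comm₂₃ := by simp }
    (exact_cokernel _) inferInstance inferInstance inferInstance

end CategoryTheory.ShortComplex

omit [Preadditive M] in
theorem IsMonoFunctor.of_exact {S : ShortComplex (M ⥤ AddCommGrpCat.{u})} (hS : S.Exact)
    [Mono S.f] (h₁ : IsMonoFunctor S.X₁) (h₃ : IsMonoFunctor S.X₃) :
    IsMonoFunctor S.X₂ := by
  intro X Y f hmono
  have hτ₁ : Mono (S.X₁.map f) := (AddCommGrpCat.mono_iff_injective _).2 (h₁ f hmono)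
  have hτ₃ : Mono (S.X₃.map f) := (AddCommGrpCat.mono_iff_injective _).2 (h₃ f hmono)
  rw [← AddCommGrpCat.mono_iff_injective]
  exact ShortComplex.mono_of_mono_of_mono_of_mono (S.mapNatTrans ((evaluation M _).map f))
    (hS.map _) (inferInstanceAs (Mono (S.f.app Y))) hτ₁ hτ₃

theorem purity_transitive_general
    (F'' F' F : M ⥤ AddCommGrpCat.{u})
    (ι₁ : F'' ⟶ F') (ι₂ : F' ⟶ F) (hι₂ : Mono ι₂)
    (hpure₁ : IsMonoFunctor (cokernel ι₁)) (hpure₂ : IsMonoFunctor (cokernel ι₂)) :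
    IsMonoFunctor (cokernel (ι₁ ≫ ι₂)) :=
  IsMonoFunctor.of_exact (ShortComplex.cokernelComp_exact ι₁ ι₂) hpure₁ hpure₂

/-- Transitivity of purity: if `F''` is pure in `F'` and `F'` is pure in `F` (all mono
functors over a small `n`-abelian category), then `F''` is pure in `F`; the quotient
`F/F''` (the cokernel of the composite inclusion) is again a mono functor. -/
theorem purity_transitive
    (n : ℕ) (hn : 1 ≤ n) (hM : IsNAbelian n M)
    (F'' F' F : M ⥤ AddCommGrpCat.{u})
    (hF''a : F''.Additive) (hF'a : F'.Additive) (hFa : F.Additive)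
    (hF'' : IsMonoFunctor F'') (hF' : IsMonoFunctor F') (hF : IsMonoFunctor F)
    (ι₁ : F'' ⟶ F') (ι₂ : F' ⟶ F) (hι₁ : Mono ι₁) (hι₂ : Mono ι₂)
    (hpure₁ : IsMonoFunctor (cokernel ι₁)) (hpure₂ : IsMonoFunctor (cokernel ι₂)) :
    IsMonoFunctor (cokernel (ι₁ ≫ ι₂)) :=
  purity_transitive_general F'' F' F ι₁ ι₂ hι₂ hpure₁ hpure₂

end
end

section
/- Let M be a small n-abelian category and f : X → Y a morphism in M. If the induced natural transformation H^f : Hom(Y,−) → Hom(X,−) is an epimorphism in the abelian category L₂(M,G), then f is a monomorphism in M. -/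
open CategoryTheory CategoryTheory.Limits

universe u

variable {M : Type u} [SmallCategory M] [Preadditive M]

/-- `F` is an absolutely pure functor: whenever `F` appears as a subfunctor of a mono
functor (in the category of additive functors), it is a pure subfunctor, i.e. the
quotient is again a mono functor. -/
def IsAbsolutelyPure (F : M ⥤ AddCommGrpCat.{u}) : Prop :=
  ∀ (G : M ⥤ AddCommGrpCat.{u}), G.Additive → IsMonoFunctor G →
    ∀ ι : F ⟶ G, Mono ι → IsMonoFunctor (cokernel ι)

/-- The defining property of objects of `L₂(M,G)`: additive, mono, and absolutely pure. -/
def L2Prop (F : M ⥤ AddCommGrpCat.{u}) : Prop :=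
  F.Additive ∧ IsMonoFunctor F ∧ IsAbsolutelyPure F

/-- The category `L₂(M,G)` of absolutely pure mono functors. -/
abbrev L2 (M : Type u) [SmallCategory M] [Preadditive M] :=
  ObjectProperty.FullSubcategory (fun F : M ⥤ AddCommGrpCat.{u} => L2Prop F)

/-- The preadditive coyoneda embedding, corestricted to any full subcategory containing the
representable functors, is still faithful, so it reflects epimorphisms. -/
theorem mono_of_epi_lift_preadditiveCoyoneda_map {C : Type*} [Category C] [Preadditive C]
    (P : ObjectProperty (C ⥤ AddCommGrpCat)) (hP : ∀ X : C, P (preadditiveCoyoneda.obj (.op X)))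
    {X Y : C} (f : X ⟶ Y)
    (h : Epi ((P.lift preadditiveCoyoneda fun X ↦ hP X.unop).map f.op)) :
    Mono f :=
  (op_epi_iff f).1 (Functor.epi_of_epi_map _ h)

theorem mono_of_epi_yoneda_general
    (hrep : ∀ X : M, L2Prop (preadditiveCoyoneda.obj (Opposite.op X)))
    {X Y : M} (f : X ⟶ Y)
    (h : Epi (show (⟨preadditiveCoyoneda.obj (Opposite.op Y), hrep Y⟩ : L2 M) ⟶
        (⟨preadditiveCoyoneda.obj (Opposite.op X), hrep X⟩ : L2 M) from
        ObjectProperty.homMk (preadditiveCoyoneda.map f.op))) :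
    Mono f :=
  mono_of_epi_lift_preadditiveCoyoneda_map L2Prop hrep f h

/-- If `H^f : Hom(Y,−) ⟶ Hom(X,−)` is an epimorphism in `L₂(M,G)`, then `f : X ⟶ Y` is a
monomorphism in `M`. -/
theorem mono_of_epi_yoneda
    (n : ℕ) (hn : 1 ≤ n) (hM : IsNAbelian n M)
    (hrep : ∀ X : M, L2Prop (preadditiveCoyoneda.obj (Opposite.op X)))
    {X Y : M} (f : X ⟶ Y)
    (h : Epi (show (⟨preadditiveCoyoneda.obj (Opposite.op Y), hrep Y⟩ : L2 M) ⟶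
        (⟨preadditiveCoyoneda.obj (Opposite.op X), hrep X⟩ : L2 M) from
        ObjectProperty.homMk (preadditiveCoyoneda.map f.op))) :
    Mono f :=
  mono_of_epi_yoneda_general hrep f h
end
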